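/- Filtered backprojection intertwining: let f ∈ L¹(ℝ²) and let k : [0, 2π] × ℝ → ℂ be bounded and measurable. Define the partial convolution (k ⊛ Rf)(θ, p) := ∫_ℝ k(θ, p − q) Rf(θ, q) dq. Then for every x ∈ ℝ², R^*(k ⊛ Rf)(x) = ∫_{ℝ²} K(x − y) f(y) dy, where K(z) := ∫_0^{2π} k(θ, z·ω(θ)) dθ = R^*k(z); that is, the filtered backprojection of Rf equals the two-dimensional convolution f ∗ R^*k. -/

import Mathlib

open MeasureTheory

/-!
Fix an angle `θ`. Rotating coordinates by `θ` (a map of determinant one) and applying Fubini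
gives the duality `∫ h(p) Rf(θ, p) dp = ∫ h(y · ω(θ)) f(y) dy` for bounded measurable `h`.
With `h(p) = k(θ, x · ω(θ) - p)` the inner integral of the left-hand side becomes
`∫ k(θ, (x - y) · ω(θ)) f(y) dy`, and since `k` is bounded and `[0, 2π]` has finite measure,
Fubini once more moves the `θ`-integral inside, onto the kernel.
-/

/-- Rotation of the plane by the angle `θ`, sending `(p, s)` to `p ω(θ) + s ω(θ)^⊥`. -/
noncomputable def planeRotation (θ : ℝ) : (ℝ × ℝ) →ₗ[ℝ] (ℝ × ℝ) where
  toFun p := (p.1 * Real.cos θ - p.2 * Real.sin θ, p.1 * Real.sin θ + p.2 * Real.cos θ)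
  map_add' p q := by ext <;> simp <;> ring
  map_smul' c p := by ext <;> simp <;> ring

@[simp] lemma planeRotation_apply (θ : ℝ) (p : ℝ × ℝ) :
    planeRotation θ p =
      (p.1 * Real.cos θ - p.2 * Real.sin θ, p.1 * Real.sin θ + p.2 * Real.cos θ) := rfl

lemma planeRotation_fst_mul_cos_add_snd_mul_sin (θ : ℝ) (p : ℝ × ℝ) :
    (planeRotation θ p).1 * Real.cos θ + (planeRotation θ p).2 * Real.sin θ = p.1 := by
  simp only [planeRotation_apply]
  linear_combination p.1 * Real.sin_sq_add_cos_sq θ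

lemma det_planeRotation (θ : ℝ) : LinearMap.det (planeRotation θ) = 1 := by
  rw [← LinearMap.det_toMatrix (Module.Basis.finTwoProd ℝ), Matrix.det_fin_two]
  simp only [LinearMap.toMatrix_apply, Module.Basis.finTwoProd_zero,
    Module.Basis.finTwoProd_one, Module.Basis.coe_finTwoProd_repr, planeRotation_apply]
  simp
  linear_combination Real.sin_sq_add_cos_sq θ

lemma measurePreserving_planeRotation (θ : ℝ) :
    MeasurePreserving (planeRotation θ) volume volume := by
  have hdet : LinearMap.det (planeRotation θ) ≠ 0 := by simp [det_planeRotation]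
  refine ⟨(planeRotation θ).continuous_of_finiteDimensional.measurable, ?_⟩
  rw [Measure.map_linearMap_addHaar_eq_smul_addHaar volume hdet, det_planeRotation]
  simp

lemma integral_eq_integral_integral_planeRotation {E : Type*} [NormedAddCommGroup E]
    [NormedSpace ℝ E] {g : ℝ × ℝ → E} (hg : Integrable g) (θ : ℝ) :
    ∫ y, g y = ∫ p : ℝ, ∫ s : ℝ, g (planeRotation θ (p, s)) := by
  have hrot := measurePreserving_planeRotation θ
  have hgrot : Integrable (g ∘ planeRotation θ) (volume.prod volume) :=
    hrot.integrable_comp_of_integrable hg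
  calc ∫ y, g y = ∫ p, g (planeRotation θ p) := by
        rw [← integral_map hrot.measurable.aemeasurable
          (by rw [hrot.map_eq]; exact hg.aestronglyMeasurable), hrot.map_eq]
    _ = ∫ p : ℝ, ∫ s : ℝ, g (planeRotation θ (p, s)) := integral_prod _ hgrot

variable {𝕜 : Type*} [RCLike 𝕜]

lemma integral_mul_integral_planeRotation {f : ℝ × ℝ → 𝕜} (hf : Integrable f) {h : ℝ → 𝕜}
    (hhm : Measurable h) {M : ℝ} (hhb : ∀ p, ‖h p‖ ≤ M) (θ : ℝ) :
    ∫ p : ℝ, h p * ∫ s : ℝ, f (planeRotation θ (p, s)) =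
      ∫ y : ℝ × ℝ, h (y.1 * Real.cos θ + y.2 * Real.sin θ) * f y := by
  have hint : Integrable fun y : ℝ × ℝ => h (y.1 * Real.cos θ + y.2 * Real.sin θ) * f y :=
    hf.bdd_mul (c := M) (hhm.comp (by fun_prop)).aestronglyMeasurable (.of_forall fun y => hhb _)
  rw [integral_eq_integral_integral_planeRotation hint θ]
  simp only [planeRotation_fst_mul_cos_add_snd_mul_sin, integral_const_mul]

lemma integral_integral_mul_swap_of_bdd {α β : Type*} [MeasurableSpace α]
    [MeasurableSpace β] {μ : Measure α} [IsFiniteMeasure μ] {ν : Measure β} [SFinite ν]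
    {K : α × β → 𝕜} (hKm : Measurable K) {M : ℝ} (hKb : ∀ z, ‖K z‖ ≤ M)
    {f : β → 𝕜} (hf : Integrable f ν) :
    ∫ a, ∫ b, K (a, b) * f b ∂ν ∂μ = ∫ b, (∫ a, K (a, b) ∂μ) * f b ∂ν := by
  have hint : Integrable (Function.uncurry fun a b => K (a, b) * f b) (μ.prod ν) :=
    (hf.comp_snd μ).bdd_mul hKm.aestronglyMeasurable (.of_forall hKb)
  rw [integral_integral_swap hint]
  simp only [integral_mul_const]

/-- **Filtered backprojection intertwining.**  For `f ∈ L¹(ℝ²)` and bounded measurable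
`k : [0,2π] × ℝ → ℂ`, with the partial convolution
`(k ⊛ Rf)(θ,p) = ∫ k(θ, p - q) Rf(θ,q) dq`, one has for every `x ∈ ℝ²`:
`R*(k ⊛ Rf)(x) = ∫ K(x - y) f(y) dy` where `K(z) = ∫₀^{2π} k(θ, z·ω(θ)) dθ = R*k(z)`;
here `Rf(θ,p) = ∫ f(p ω(θ) + s ω(θ)^⊥) ds`, `R*g(x) = ∫₀^{2π} g(θ, x·ω(θ)) dθ`,
`ω(θ) = (cos θ, sin θ)`, `ω(θ)^⊥ = (-sin θ, cos θ)`. -/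
theorem filtered_backprojection_intertwining
    (f : ℝ × ℝ → ℂ) (hf : Integrable f volume)
    (k : ℝ × ℝ → ℂ) (hkm : Measurable k) (M : ℝ) (hkb : ∀ q : ℝ × ℝ, ‖k q‖ ≤ M)
    (x : ℝ × ℝ) :
    (∫ θ in Set.Icc (0 : ℝ) (2 * Real.pi), ∫ q : ℝ,
        k (θ, (x.1 * Real.cos θ + x.2 * Real.sin θ) - q) *
          (∫ s : ℝ, f (q * Real.cos θ - s * Real.sin θ, q * Real.sin θ + s * Real.cos θ)))
      = ∫ y : ℝ × ℝ,
          (∫ θ in Set.Icc (0 : ℝ) (2 * Real.pi),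
            k (θ, (x.1 - y.1) * Real.cos θ + (x.2 - y.2) * Real.sin θ)) * f y := by
  have hslice (θ : ℝ) :
      ∫ q : ℝ, k (θ, (x.1 * Real.cos θ + x.2 * Real.sin θ) - q) *
          ∫ s : ℝ, f (planeRotation θ (q, s)) =
        ∫ y : ℝ × ℝ, k (θ, (x.1 - y.1) * Real.cos θ + (x.2 - y.2) * Real.sin θ) * f y := by
    rw [integral_mul_integral_planeRotation (h := fun q => k (θ, _ - q)) hf
      (hkm.comp (by fun_prop)) (fun _ => hkb _) θ]
    congr! 5 with y
    ring
  have hkernel : Measurable fun z : ℝ × (ℝ × ℝ) =>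
      k (z.1, (x.1 - z.2.1) * Real.cos z.1 + (x.2 - z.2.2) * Real.sin z.1) :=
    hkm.comp (by fun_prop)
  exact (integral_congr_ae (.of_forall hslice)).trans
    (integral_integral_mul_swap_of_bdd hkernel (fun _ => hkb _) hf)
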